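/- arXiv:2605.26707 — 3 statements merged into one kernel-verified Lean document; each statement's English description precedes it below -/
import Mathlib

section
/- Let M be an n×n real symmetric matrix, θ the number of eigenvalues below tr(M)/n, and t an integer with 1 ≤ t ≤ n − θ. Then for every integer k with t ≤ k ≤ n, Σ_{i=1}^{k} λᵢ(M) ≤ (k/n)·tr(M) + √( tr((M − (tr(M)/n)·I)²) · (k − t²/(θ+t)) ). -/
/-!
Shifting by `μ = tr M / n`, the entries `yᵢ = λᵢ - μ` sum to zero, `θ` of them are negative, and
`∑ yᵢ² = tr ((M - μ I)²)`. For `k' = min k (n - θ)` the sum `s` of the `k'` largest entries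
dominates the sum of the `k` largest and consists of nonnegative entries, while the `θ` negative
entries sum to at most `-s`. Cauchy–Schwarz on both groups gives `s² (1/k' + 1/θ) ≤ ∑ yᵢ²`, and
`k'θ/(k' + θ) ≤ k - t²/(θ + t)` because `x ↦ x²/(x + θ)` is increasing.
-/

open Finset Matrix

lemma Matrix.IsHermitian.trace_cfc {ι 𝕜 : Type*} [Fintype ι] [DecidableEq ι] [RCLike 𝕜]
    {A : Matrix ι ι 𝕜} (hA : A.IsHermitian) (f : ℝ → ℝ) :
    (cfc f A).trace = ∑ i, (f (hA.eigenvalues i) : 𝕜) := by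
  rw [hA.cfc_eq, IsHermitian.cfc, Unitary.conjStarAlgAut_apply, trace_mul_cycle,
    Unitary.coe_star_mul_self, one_mul, trace_diagonal]
  rfl

lemma Matrix.IsHermitian.trace_sub_smul_one_sq {ι 𝕜 : Type*} [Fintype ι] [DecidableEq ι]
    [RCLike 𝕜]
    {A : Matrix ι ι 𝕜} (hA : A.IsHermitian) (μ : ℝ) :
    ((A - μ • 1) ^ 2).trace = ∑ i, (((hA.eigenvalues i - μ) ^ 2 : ℝ) : 𝕜) := by
  rw [← hA.trace_cfc (fun x => (x - μ) ^ 2), cfc_pow (fun x => x - μ) 2 A,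
    cfc_sub (fun x => x) (fun _ => μ) A, cfc_id' ℝ A, cfc_const μ A,
    Algebra.algebraMap_eq_smul_one]

theorem sq_sum_mul_card_add_card_neg_le {ι : Type*} [Fintype ι] {y : ι → ℝ}
    (hy : ∑ i, y i = 0) {S : Finset ι} (hS : ∀ i ∈ S, 0 ≤ y i) :
    (∑ i ∈ S, y i) ^ 2 * (#S + #{i | y i < 0}) ≤ #S * #{i | y i < 0} * ∑ i, y i ^ 2 := by
  set G : Finset ι := {i | y i < 0}
  have hdisj : Disjoint S G :=
    disjoint_left.mpr fun i hiS hiG => (hS i hiS).not_gt (mem_filter.mp hiG).2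
  have hs_nonneg : 0 ≤ ∑ i ∈ S, y i := sum_nonneg hS
  -- the mass of `S` is at most the total positive mass, which balances the negative mass
  have hs_le : ∑ i ∈ S, y i ≤ -∑ i ∈ G, y i := by
    have hsplit := sum_filter_add_sum_filter_not univ (fun i => y i < 0) y
    calc ∑ i ∈ S, y i ≤ ∑ i with ¬ y i < 0, y i :=
          sum_le_sum_of_subset_of_nonneg (fun i hi => by simpa using hS i hi)
            (fun i hi _ => not_lt.mp (mem_filter.mp hi).2)
      _ = -∑ i ∈ G, y i := by linarith
  have hS_cs : (∑ i ∈ S, y i) ^ 2 ≤ #S * ∑ i ∈ S, y i ^ 2 := sq_sum_le_card_mul_sum_sq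
  have hG_cs : (∑ i ∈ S, y i) ^ 2 ≤ #G * ∑ i ∈ G, y i ^ 2 :=
    calc (∑ i ∈ S, y i) ^ 2 ≤ (∑ i ∈ G, y i) ^ 2 := by nlinarith
      _ ≤ #G * ∑ i ∈ G, y i ^ 2 := sq_sum_le_card_mul_sum_sq
  have hsq : ∑ i ∈ S, y i ^ 2 + ∑ i ∈ G, y i ^ 2 ≤ ∑ i, y i ^ 2 := by
    classical
    rw [← sum_union hdisj]
    exact sum_le_sum_of_subset_of_nonneg (subset_univ _) fun i _ _ => sq_nonneg _
  have hS0 : (0 : ℝ) ≤ #S := by positivity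
  have hG0 : (0 : ℝ) ≤ #G := by positivity
  nlinarith [mul_le_mul_of_nonneg_left hS_cs hG0, mul_le_mul_of_nonneg_left hG_cs hS0,
    mul_le_mul_of_nonneg_left hsq (mul_nonneg hS0 hG0)]

theorem mul_le_add_mul_sub_sq_div {a b c t : ℝ} (ht : 0 < t) (hta : t ≤ a) (hac : a ≤ c)
    (hb : 0 ≤ b) : a * b ≤ (a + b) * (c - t ^ 2 / (b + t)) := by
  have h : (a + b) * (t ^ 2 / (b + t)) ≤ a ^ 2 := by
    rw [← mul_div_assoc, div_le_iff₀ (by positivity)]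
    nlinarith [mul_nonneg hb (mul_nonneg (sub_nonneg.mpr hta) (by linarith : 0 ≤ a + t)),
      mul_nonneg (mul_nonneg ht.le (ht.le.trans hta)) (sub_nonneg.mpr hta)]
  nlinarith

theorem Antitone.nonneg_iff_lt_card {n : ℕ} {y : Fin n → ℝ} (hy : Antitone y) (i : Fin n) :
    0 ≤ y i ↔ (i : ℕ) < n - #{j | y j < 0} := by
  have hcard : #{j | 0 ≤ y j} = n - #{j | y j < 0} := by
    have h := card_filter_add_card_filter_not (s := univ) (fun j : Fin n => y j < 0)
    simp only [not_lt, card_univ, Fintype.card_fin] at h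
    omega
  rw [← hcard, Fin.lt_card_filter_univ_iff_apply_of_imp]
  exact fun i j hji hi => hi.trans (hy hji)

theorem Antitone.sum_filter_lt_le_sqrt {n : ℕ} {y : Fin n → ℝ} (hy : Antitone y)
    (hsum : ∑ i, y i = 0) {t k : ℕ} (ht : 1 ≤ t) (htθ : t ≤ n - #{i | y i < 0}) (htk : t ≤ k) :
    ∑ i ∈ univ.filter (fun i : Fin n => (i : ℕ) < k), y i ≤
      √((∑ i, y i ^ 2) * (k - t ^ 2 / (#{i | y i < 0} + t))) := by
  set θ := #{i | y i < 0}
  set k' := min k (n - θ)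
  have hS : ∀ i ∈ univ.filter (fun i : Fin n => (i : ℕ) < k'), 0 ≤ y i := fun i hi =>
    (hy.nonneg_iff_lt_card i).mpr ((mem_filter.mp hi).2.trans_le (min_le_right _ _))
  have htrunc : ∑ i ∈ univ.filter (fun i : Fin n => (i : ℕ) < k), y i ≤
      ∑ i ∈ univ.filter (fun i : Fin n => (i : ℕ) < k'), y i :=
    sum_le_sum_of_subset_of_nonpos'
      (fun i hi => by simp only [mem_filter, mem_univ, true_and] at hi ⊢; omega)
      fun i hik hik' => by
        simp only [mem_filter, mem_univ, true_and] at hik hik'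
        exact (not_le.mp fun hi => by have := (hy.nonneg_iff_lt_card i).mp hi; omega).le
  have hcard : #(univ.filter (fun i : Fin n => (i : ℕ) < k')) = k' := by
    rw [Fin.card_filter_val_lt]; omega
  have hkey := sq_sum_mul_card_add_card_neg_le hsum hS
  rw [hcard] at hkey
  have ht' : (1 : ℝ) ≤ t := by exact_mod_cast ht
  have hθ : (0 : ℝ) ≤ θ := θ.cast_nonneg
  have hratio := mul_le_add_mul_sub_sq_div (b := (θ : ℝ)) (by linarith)
    (by exact_mod_cast le_min htk htθ : (t : ℝ) ≤ k')
    (by exact_mod_cast min_le_left k (n - θ) : (k' : ℝ) ≤ k) hθ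
  have hpos : (0 : ℝ) < k' + θ := by
    linarith [(by exact_mod_cast le_min htk htθ : (t : ℝ) ≤ k')]
  have hT : 0 ≤ ∑ i, y i ^ 2 := sum_nonneg fun i _ => sq_nonneg _
  refine htrunc.trans (Real.le_sqrt_of_sq_le (le_of_mul_le_mul_right ?_ hpos))
  nlinarith [mul_le_mul_of_nonneg_left hratio hT]

theorem stmt6_general {n : ℕ} (M : Matrix (Fin n) (Fin n) ℝ)
    (hM : M.IsHermitian)
    (lam : Fin n → ℝ) (σ : Equiv.Perm (Fin n))
    (hlam : lam = hM.eigenvalues ∘ σ) (hdec : Antitone lam)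
    (θ : ℕ)
    (hθ : θ = (Finset.univ.filter (fun i => lam i < M.trace / n)).card)
    (t : ℕ) (ht1 : 1 ≤ t) (htn : t ≤ n - θ)
    (k : ℕ) (hkt : t ≤ k) (hkn : k ≤ n) :
    ∑ i ∈ Finset.univ.filter (fun i : Fin n => (i : ℕ) < k), lam i ≤
      ((k : ℝ) / n) * M.trace +
        Real.sqrt
          (Matrix.trace ((M - (M.trace / n) • (1 : Matrix (Fin n) (Fin n) ℝ)) ^ 2) *
            ((k : ℝ) - (t : ℝ) ^ 2 / ((θ : ℝ) + t))) := by
  have hn : (n : ℝ) ≠ 0 := by exact_mod_cast (show n ≠ 0 by omega)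
  set μ := M.trace / n
  set y : Fin n → ℝ := fun i => lam i - μ
  have hsum_lam : ∑ i, lam i = M.trace := by
    rw [hM.trace_eq_sum_eigenvalues, hlam]
    exact Equiv.sum_comp σ hM.eigenvalues
  have hsum : ∑ i, y i = 0 := by
    simp only [y, sum_sub_distrib, hsum_lam, sum_const, card_univ, Fintype.card_fin, nsmul_eq_mul]
    rw [mul_div_cancel₀ _ hn, sub_self]
  have hθy : θ = #{i | y i < 0} := by simp only [hθ, y, sub_neg]
  have htrace : ((M - μ • 1) ^ 2).trace = ∑ i, y i ^ 2 := by
    rw [hM.trace_sub_smul_one_sq]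
    simp only [y, hlam, Function.comp_apply, RCLike.ofReal_real_eq_id, id_eq]
    exact (Equiv.sum_comp σ fun j => (hM.eigenvalues j - μ) ^ 2).symm
  have hy : Antitone y := fun i j hij => sub_le_sub_right (hdec hij) μ
  have hbound := hy.sum_filter_lt_le_sqrt hsum ht1 (hθy ▸ htn) hkt
  have hshift : ∑ i ∈ univ.filter (fun i : Fin n => (i : ℕ) < k), lam i =
      ∑ i ∈ univ.filter (fun i : Fin n => (i : ℕ) < k), y i + k / n * M.trace := by
    rw [sum_sub_distrib, sum_const, Fin.card_filter_val_lt, min_eq_right hkn, nsmul_eq_mul]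
    ring
  rw [hshift, htrace, hθy]
  linarith

/-- Upper bound for the sum of the `k` largest eigenvalues of a
real symmetric matrix `M`, where `θ` is the number of eigenvalues below
`tr(M)/n` and `1 ≤ t ≤ n − θ`: for `t ≤ k ≤ n`,
`∑_{i=1}^k λᵢ(M) ≤ (k/n) tr(M) + √(tr((M − (tr(M)/n)I)²) (k − t²/(θ+t)))`. -/
theorem stmt6 {n : ℕ} (hn : 1 ≤ n) (M : Matrix (Fin n) (Fin n) ℝ)
    (hM : M.IsHermitian)
    (lam : Fin n → ℝ) (σ : Equiv.Perm (Fin n))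
    (hlam : lam = hM.eigenvalues ∘ σ) (hdec : Antitone lam)
    (θ : ℕ)
    (hθ : θ = (Finset.univ.filter (fun i => lam i < M.trace / n)).card)
    (t : ℕ) (ht1 : 1 ≤ t) (htn : t ≤ n - θ)
    (k : ℕ) (hkt : t ≤ k) (hkn : k ≤ n) :
    ∑ i ∈ Finset.univ.filter (fun i : Fin n => (i : ℕ) < k), lam i ≤
      ((k : ℝ) / n) * M.trace +
        Real.sqrt
          (Matrix.trace ((M - (M.trace / n) • (1 : Matrix (Fin n) (Fin n) ℝ)) ^ 2) *
            ((k : ℝ) - (t : ℝ) ^ 2 / ((θ : ℝ) + t))) :=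
  stmt6_general M hM lam σ hlam hdec θ hθ t ht1 htn k hkt hkn
end

section
/- Let G be a triangle-free simple graph of order n ≥ 3. Then λ₁(G) + λ₂(G) < √(n(n−2)) < n. -/
/-!
With `λ₁ ≥ ⋯ ≥ λₙ` the adjacency eigenvalues and `m` the number of edges, `∑ λᵢ = tr A = 0` and
`∑ λᵢ² = tr A² = 2m`. Cauchy–Schwarz on `λ₃, …, λₙ` gives
`(λ₁ + λ₂)² ≤ (n - 2)(2m - λ₁² - λ₂²)`, hence `n (λ₁ + λ₂)² ≤ (n - 2)(4m - (λ₁ - λ₂)²)`, and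
Mantel's bound `4m ≤ n²` yields `(λ₁ + λ₂)² ≤ n(n - 2)`. Equality would force `4m = n²` and
`λ₁ = λ₂`, which contradicts the Rayleigh bound `2m / n ≤ λ₁`.
-/

open Matrix Finset Unitary
open scoped ComplexOrder

namespace Matrix.IsHermitian

variable {𝕜 ι : Type*} [RCLike 𝕜] [Fintype ι] [DecidableEq ι] {A : Matrix ι ι 𝕜}

theorem trace_mul_self_eq_sum_eigenvalues_sq (hA : A.IsHermitian) :
    (A * A).trace = ∑ i, (hA.eigenvalues i : 𝕜) ^ 2 := by
  conv_lhs => rw [hA.spectral_theorem, ← map_mul, conjStarAlgAut_apply, trace_mul_cycle,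
    Unitary.coe_star_mul_self, one_mul, diagonal_mul_diagonal, trace_diagonal]
  simp [sq]

theorem posSemidef_smul_one_sub (hA : A.IsHermitian) {c : ℝ} (hc : ∀ i, hA.eigenvalues i ≤ c) :
    (c • (1 : Matrix ι ι 𝕜) - A).PosSemidef := by
  have hdiag : c • (1 : Matrix ι ι 𝕜) - A = conjStarAlgAut 𝕜 _ hA.eigenvectorUnitary
      (diagonal (RCLike.ofReal ∘ fun i ↦ c - hA.eigenvalues i)) := by
    have hsub : diagonal (RCLike.ofReal ∘ fun i ↦ c - hA.eigenvalues i) =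
        c • (1 : Matrix ι ι 𝕜) - diagonal (RCLike.ofReal ∘ hA.eigenvalues) := by
      ext i j
      by_cases h : i = j <;> simp [h, diagonal, RCLike.real_smul_eq_coe_mul]
    rw [hsub, map_sub, ← hA.spectral_theorem, conjStarAlgAut_apply, mul_smul_comm, mul_one,
      smul_mul_assoc, Unitary.mul_star_self_of_mem hA.eigenvectorUnitary.2]
  rw [hdiag, conjStarAlgAut_apply, star_eq_conjTranspose]
  refine PosSemidef.mul_mul_conjTranspose_same (PosSemidef.diagonal fun i ↦ ?_) _
  simpa using hc i

theorem re_dotProduct_mulVec_le (hA : A.IsHermitian) {c : ℝ} (hc : ∀ i, hA.eigenvalues i ≤ c)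
    (x : ι → 𝕜) : RCLike.re (star x ⬝ᵥ A *ᵥ x) ≤ c * RCLike.re (star x ⬝ᵥ x) := by
  have := (hA.posSemidef_smul_one_sub hc).re_dotProduct_nonneg x
  rw [sub_mulVec, smul_mulVec, one_mulVec, dotProduct_sub, dotProduct_smul, map_sub,
    RCLike.smul_re] at this
  linarith

end Matrix.IsHermitian

namespace SimpleGraph

variable {V : Type*} [Fintype V] (G : SimpleGraph V) [DecidableRel G.Adj]

theorem CliqueFree.four_mul_card_edgeFinset_le (h : G.CliqueFree 3) :
    4 * #G.edgeFinset ≤ Fintype.card V ^ 2 := by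
  have hle : #G.edgeFinset ≤ (Fintype.card V ^ 2 - (Fintype.card V % 2) ^ 2) / 4 := by
    simpa [Nat.choose_eq_zero_of_lt (Nat.mod_lt _ two_pos)] using
      CliqueFree.card_edgeFinset_le (r := 2) h
  have := Nat.mul_div_le (Fintype.card V ^ 2 - (Fintype.card V % 2) ^ 2) 4
  omega

variable [DecidableEq V]

theorem sum_eigenvalues_adjMatrix (hA : (G.adjMatrix ℝ).IsHermitian) :
    ∑ i, hA.eigenvalues i = 0 := by
  simpa using hA.trace_eq_sum_eigenvalues.symm

theorem sum_sq_eigenvalues_adjMatrix (hA : (G.adjMatrix ℝ).IsHermitian) :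
    ∑ i, hA.eigenvalues i ^ 2 = 2 * #G.edgeFinset := by
  have := hA.trace_mul_self_eq_sum_eigenvalues_sq
  simp only [RCLike.ofReal_real_eq_id, id] at this
  rw [← this, trace]
  simp only [diag_apply, adjMatrix_mul_self_apply_self]
  exact_mod_cast G.sum_degrees_eq_twice_card_edges

theorem two_mul_card_edgeFinset_le (hA : (G.adjMatrix ℝ).IsHermitian) {c : ℝ}
    (hc : ∀ i, hA.eigenvalues i ≤ c) : 2 * (#G.edgeFinset : ℝ) ≤ c * Fintype.card V := by
  have := hA.re_dotProduct_mulVec_le hc 1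
  rw [star_one, RCLike.re_to_real, RCLike.re_to_real, one_dotProduct_one, dotProduct_comm,
    ← natCast_card_dart_eq_dotProduct, dart_card_eq_twice_card_edges] at this
  exact_mod_cast this

end SimpleGraph

theorem sq_add_le_of_sum_eq_zero {ι : Type*} [Fintype ι] [DecidableEq ι] {f : ι → ℝ}
    (hf : ∑ k, f k = 0) {i j : ι} (hij : i ≠ j) :
    (f i + f j) ^ 2 ≤ (Fintype.card ι - 2) * (∑ k, f k ^ 2 - f i ^ 2 - f j ^ 2) := by
  have hsub : {i, j} ⊆ (univ : Finset ι) := subset_univ _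
  have hcard : (#(univ \ {i, j}) : ℝ) = Fintype.card ι - 2 := by
    rw [card_sdiff_of_subset hsub, card_pair hij, card_univ,
      Nat.cast_sub (by simpa [card_pair hij] using card_le_univ {i, j})]
    norm_num
  have hrest : ∑ k ∈ univ \ {i, j}, f k = -(f i + f j) := by
    rw [sum_sdiff_eq_sub hsub, hf, sum_pair hij]; ring
  have hrest_sq : ∑ k ∈ univ \ {i, j}, f k ^ 2 = ∑ k, f k ^ 2 - f i ^ 2 - f j ^ 2 := by
    rw [sum_sdiff_eq_sub hsub, sum_pair hij]; ring
  simpa only [hrest, hrest_sq, hcard, neg_sq] using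
    sq_sum_le_card_mul_sum_sq (s := univ \ {i, j}) (f := f)

theorem add_lt_sqrt_of_sq_add_le {N T a b : ℝ} (hN : 2 < N) (hT : 2 * T ≤ N ^ 2)
    (ha : T ≤ a * N) (hab : (a + b) ^ 2 ≤ (N - 2) * (T - a ^ 2 - b ^ 2)) :
    a + b < √(N * (N - 2)) := by
  refine Real.lt_sqrt_of_sq_lt (lt_of_not_ge fun hge ↦ ?_)
  have hN2 : 0 < N - 2 := by linarith
  have hsq : (a + b) ^ 2 * N ≤ (N - 2) * (2 * T - (a - b) ^ 2) := by nlinarith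
  have hT_eq : 2 * T = N ^ 2 := by nlinarith
  have hd : (N - 2) * (a - b) ^ 2 ≤ 0 := by
    nlinarith [mul_le_mul_of_nonneg_right hge (by linarith : (0 : ℝ) ≤ N)]
  have hab_eq : a = b := by
    have hd0 : (a - b) ^ 2 ≤ 0 := by nlinarith
    exact sub_eq_zero.mp (pow_eq_zero_iff two_ne_zero |>.mp (le_antisymm hd0 (sq_nonneg _)))
  subst hab_eq
  have h2a : N ≤ 2 * a := by nlinarith
  nlinarith [mul_le_mul h2a h2a (by linarith) (by linarith)]

/-- For a triangle-free simple graph of order `n ≥ 3`, the two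
largest adjacency eigenvalues satisfy `λ₁ + λ₂ < √(n(n−2)) < n`. -/
theorem stmt11 {n : ℕ} (hn : 3 ≤ n) (G : SimpleGraph (Fin n)) [DecidableRel G.Adj]
    (htf : G.CliqueFree 3)
    (hA : (G.adjMatrix ℝ).IsHermitian)
    (lam : Fin n → ℝ) (σ : Equiv.Perm (Fin n))
    (hlam : lam = hA.eigenvalues ∘ σ) (hdec : Antitone lam) :
    lam ⟨0, by omega⟩ + lam ⟨1, by omega⟩ <
        Real.sqrt ((n : ℝ) * ((n : ℝ) - 2)) ∧
      Real.sqrt ((n : ℝ) * ((n : ℝ) - 2)) < n := by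
  subst hlam
  have hN : (2 : ℝ) < n := by exact_mod_cast hn
  have hmax : ∀ k, hA.eigenvalues k ≤ hA.eigenvalues (σ ⟨0, by omega⟩) := fun k ↦ by
    simpa using hdec (show (⟨0, by omega⟩ : Fin n) ≤ σ.symm k from Nat.zero_le _)
  have hsum : ∑ k, (hA.eigenvalues ∘ σ) k = 0 :=
    (Equiv.sum_comp σ hA.eigenvalues).trans (G.sum_eigenvalues_adjMatrix hA)
  have hsum_sq : ∑ k, (hA.eigenvalues ∘ σ) k ^ 2 = 2 * #G.edgeFinset :=
    (Equiv.sum_comp σ (hA.eigenvalues · ^ 2)).trans (G.sum_sq_eigenvalues_adjMatrix hA)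
  have hmantel : (4 * #G.edgeFinset : ℝ) ≤ n ^ 2 := by
    exact_mod_cast (Fintype.card_fin n ▸ htf.four_mul_card_edgeFinset_le)
  have hrayleigh := G.two_mul_card_edgeFinset_le hA hmax
  have hcs := sq_add_le_of_sum_eq_zero hsum (i := ⟨0, by omega⟩) (j := ⟨1, by omega⟩)
    (by simp [Fin.ext_iff])
  rw [hsum_sq, Fintype.card_fin] at hcs
  rw [Fintype.card_fin] at hrayleigh
  refine ⟨add_lt_sqrt_of_sq_add_le hN (by linarith) hrayleigh hcs, ?_⟩
  exact (Real.sqrt_lt' (by positivity)).2 (by nlinarith)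
end

section
/- Let G be a simple graph on n ≥ 6 vertices with m edges. If m ≥ 4n + 17, then the sum of the 4 largest Laplacian eigenvalues of G satisfies μ₁ + μ₂ + μ₃ + μ₄ ≤ m + 10, i.e., Brouwer's conjecture holds for k = 4. -/
/-!
The Laplacian quadratic form `½ ∑_{i ~ j} (xᵢ - xⱼ)²` is dominated by the same sum over all pairs,
which equals `n ‖x‖² - (∑ xᵢ)²`; hence every Laplacian eigenvalue is at most `n`. The four largest
therefore sum to at most `4n ≤ m - 17`.
-/

open Finset Matrix

theorem Finset.sum_sum_sub_sq {ι R : Type*} [Fintype ι] [CommRing R] (x : ι → R) :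
    ∑ i, ∑ j, (x i - x j) ^ 2 = 2 * Fintype.card ι * ∑ i, x i ^ 2 - 2 * (∑ i, x i) ^ 2 := by
  simp only [sub_sq, sum_add_distrib, sum_sub_distrib, ← mul_sum, ← sum_mul, sum_const, card_univ,
    nsmul_eq_mul]
  ring

theorem Matrix.IsHermitian.eigenvalues_le_of_re_dotProduct_le {𝕜 n : Type*} [RCLike 𝕜]
    [Fintype n] [DecidableEq n] {A : Matrix n n 𝕜} (hA : A.IsHermitian) {c : ℝ}
    (h : ∀ x : n → 𝕜, RCLike.re (star x ⬝ᵥ A *ᵥ x) ≤ c * RCLike.re (star x ⬝ᵥ x)) (i : n) :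
    hA.eigenvalues i ≤ c := by
  have hunit : RCLike.re (star ⇑(hA.eigenvectorBasis i) ⬝ᵥ ⇑(hA.eigenvectorBasis i)) = 1 := by
    rw [dotProduct_comm, ← EuclideanSpace.inner_eq_star_dotProduct, inner_self_eq_norm_sq,
      hA.eigenvectorBasis.orthonormal.1 i, one_pow]
  simpa [hA.eigenvalues_eq, hunit] using h (hA.eigenvectorBasis i)

namespace SimpleGraph

variable {V : Type*} [Fintype V] [DecidableEq V] (G : SimpleGraph V) [DecidableRel G.Adj]

theorem dotProduct_lapMatrix_mulVec_le (x : V → ℝ) :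
    x ⬝ᵥ G.lapMatrix ℝ *ᵥ x ≤ Fintype.card V * (x ⬝ᵥ x) := by
  have hadj : ∑ i, ∑ j, (if G.Adj i j then (x i - x j) ^ 2 else 0) ≤ ∑ i, ∑ j, (x i - x j) ^ 2 :=
    sum_le_sum fun i _ ↦ sum_le_sum fun j _ ↦ by split_ifs; exacts [le_rfl, sq_nonneg _]
  have hx : x ⬝ᵥ x = ∑ i, x i ^ 2 := by simp only [dotProduct, sq]
  rw [sum_sum_sub_sq] at hadj
  rw [← toLinearMap₂'_apply', lapMatrix_toLinearMap₂', hx]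
  nlinarith [sq_nonneg (∑ i, x i)]

theorem eigenvalues_lapMatrix_le_card (hL : (G.lapMatrix ℝ).IsHermitian) (i : V) :
    hL.eigenvalues i ≤ Fintype.card V :=
  hL.eigenvalues_le_of_re_dotProduct_le
    (fun x ↦ by simpa using G.dotProduct_lapMatrix_mulVec_le x) i

end SimpleGraph

/-- For a simple graph on `n ≥ 6` vertices with `m ≥ 4n + 17`
edges, the sum of the four largest Laplacian eigenvalues is at most `m + 10`
(Brouwer's conjecture for `k = 4`). -/
theorem stmt19 {n : ℕ} (hn : 6 ≤ n) (G : SimpleGraph (Fin n)) [DecidableRel G.Adj]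
    (m : ℕ) (hm4 : 4 * n + 17 ≤ m)
    (hL : (G.lapMatrix ℝ).IsHermitian)
    (mu : Fin n → ℝ) (σ : Equiv.Perm (Fin n))
    (hmu : mu = hL.eigenvalues ∘ σ) :
    mu ⟨0, by omega⟩ + mu ⟨1, by omega⟩ + mu ⟨2, by omega⟩ + mu ⟨3, by omega⟩ ≤
      (m : ℝ) + 10 := by
  have hle : ∀ i, mu i ≤ n := fun i ↦ by
    simpa [hmu] using G.eigenvalues_lapMatrix_le_card hL (σ i)
  have hm : (4 * n + 17 : ℝ) ≤ m := by exact_mod_cast hm4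
  linarith [hle ⟨0, by omega⟩, hle ⟨1, by omega⟩, hle ⟨2, by omega⟩, hle ⟨3, by omega⟩]
end
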